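/- arXiv:2602.14072 — 4 statements merged into one kernel-verified Lean document; each statement's English description precedes it below -/
import Mathlib

section
/- For complex numbers μ, ν with Re(μ) > 0 and Re(ν) > 0, and positive reals A, B, one has 1/(A^μ B^ν) = (Γ(μ+ν)/(Γ(μ)Γ(ν))) ∫₀¹ s^{μ-1} (1-s)^{ν-1} (sA + (1-s)B)^{-(μ+ν)} ds. -/
/-!
The substitution `s = B t / (A (1 - t) + B t)` is a bijection of `(0, 1)` with Jacobian
`A B / (A (1 - t) + B t)²`, and it turns the integrand into `A^{-μ} B^{-ν} t^{μ-1} (1-t)^{ν-1}`,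
so the integral is `A^{-μ} B^{-ν} B(μ, ν) = A^{-μ} B^{-ν} Γ(μ)Γ(ν)/Γ(μ+ν)`.
-/

open Set MeasureTheory

lemma ofReal_cpow_eq_exp_log {x : ℝ} (hx : 0 < x) (w : ℂ) :
    (x : ℂ) ^ w = Complex.exp (Real.log x * w) := by
  rw [Complex.cpow_def_of_ne_zero (by exact_mod_cast hx.ne'), Complex.ofReal_log hx.le]

/-- Used with `a = A`, `b = B`, `c = t`, `d = 1 - t`, `e = A (1 - t) + B t`. -/
lemma ofReal_cpow_feynman_identity {a b c d e : ℝ} (ha : 0 < a) (hb : 0 < b) (hc : 0 < c)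
    (hd : 0 < d) (he : 0 < e) (μ ν : ℂ) :
    ((a * b / e ^ 2 : ℝ) : ℂ) * (((b * c / e : ℝ) : ℂ) ^ (μ - 1) *
        ((a * d / e : ℝ) : ℂ) ^ (ν - 1) * ((a * b / e : ℝ) : ℂ) ^ (-(μ + ν)))
      = (a : ℂ) ^ (-μ) * (b : ℂ) ^ (-ν) * ((c : ℂ) ^ (μ - 1) * (d : ℂ) ^ (ν - 1)) := by
  rw [← Complex.cpow_one ((a * b / e ^ 2 : ℝ) : ℂ)]
  simp only [ofReal_cpow_eq_exp_log (by positivity : (0 : ℝ) < a * b / e ^ 2),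
    ofReal_cpow_eq_exp_log (by positivity : (0 : ℝ) < b * c / e),
    ofReal_cpow_eq_exp_log (by positivity : (0 : ℝ) < a * d / e),
    ofReal_cpow_eq_exp_log (by positivity : (0 : ℝ) < a * b / e),
    ofReal_cpow_eq_exp_log ha, ofReal_cpow_eq_exp_log hb, ofReal_cpow_eq_exp_log hc,
    ofReal_cpow_eq_exp_log hd, ← Complex.exp_add]
  congr 1
  rw [Real.log_div (by positivity) (by positivity), Real.log_div (by positivity) (by positivity),
    Real.log_div (by positivity) (by positivity), Real.log_div (by positivity) (by positivity),
    Real.log_mul ha.ne' hb.ne', Real.log_mul hb.ne' hc.ne', Real.log_mul ha.ne' hd.ne',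
    Real.log_pow]
  push_cast
  ring

lemma integral_Ioo_cpow_mul_one_sub_cpow (μ ν : ℂ) :
    ∫ t in Ioo (0 : ℝ) 1, (t : ℂ) ^ (μ - 1) * ((1 - t : ℝ) : ℂ) ^ (ν - 1) =
      Complex.betaIntegral μ ν := by
  rw [Complex.betaIntegral, intervalIntegral.integral_of_le zero_le_one,
    ← integral_Ioc_eq_integral_Ioo]
  push_cast
  rfl

noncomputable def feynmanSubst (A B t : ℝ) : ℝ := B * t / (A * (1 - t) + B * t)

section FeynmanSubst

variable {A B t : ℝ}

lemma feynmanSubst_denom_pos (hA : 0 < A) (hB : 0 < B) (ht : t ∈ Ioo (0 : ℝ) 1) :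
    0 < A * (1 - t) + B * t := by
  have := ht.1; have := ht.2
  have : 0 < A * (1 - t) := mul_pos hA (by linarith)
  positivity

lemma mapsTo_feynmanSubst (hA : 0 < A) (hB : 0 < B) :
    MapsTo (feynmanSubst A B) (Ioo 0 1) (Ioo 0 1) := by
  intro t ht
  have hD := feynmanSubst_denom_pos hA hB ht
  refine ⟨div_pos (mul_pos hB ht.1) hD, (div_lt_one hD).2 ?_⟩
  nlinarith [ht.2]

lemma feynmanSubst_feynmanSubst (hA : 0 < A) (hB : 0 < B) (ht : t ∈ Ioo (0 : ℝ) 1) :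
    feynmanSubst A B (feynmanSubst B A t) = t := by
  have hD := feynmanSubst_denom_pos hB hA ht
  rw [feynmanSubst, div_eq_iff (feynmanSubst_denom_pos hA hB (mapsTo_feynmanSubst hB hA ht)).ne',
    feynmanSubst]
  field_simp
  ring

lemma bijOn_feynmanSubst (hA : 0 < A) (hB : 0 < B) :
    BijOn (feynmanSubst A B) (Ioo 0 1) (Ioo 0 1) :=
  InvOn.bijOn ⟨fun _ ht => feynmanSubst_feynmanSubst hB hA ht,
      fun _ ht => feynmanSubst_feynmanSubst hA hB ht⟩
    (mapsTo_feynmanSubst hA hB) (mapsTo_feynmanSubst hB hA)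

lemma hasDerivAt_feynmanSubst (hA : 0 < A) (hB : 0 < B) (ht : t ∈ Ioo (0 : ℝ) 1) :
    HasDerivAt (feynmanSubst A B) (A * B / (A * (1 - t) + B * t) ^ 2) t := by
  have hD := feynmanSubst_denom_pos hA hB ht
  have hnum : HasDerivAt (fun t : ℝ => B * t) B t := by
    simpa using (hasDerivAt_id t).const_mul B
  have hden : HasDerivAt (fun t : ℝ => A * (1 - t) + B * t) (B - A) t :=
    ((((hasDerivAt_id' t).const_sub 1).const_mul A).fun_add
      ((hasDerivAt_id' t).const_mul B)).congr_deriv (by ring)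
  exact (hnum.div hden hD.ne').congr_deriv (by ring)

lemma integral_Ioo_eq_integral_comp_feynmanSubst {E : Type*} [NormedAddCommGroup E]
    [NormedSpace ℝ E] (hA : 0 < A) (hB : 0 < B) (g : ℝ → E) :
    ∫ s in Ioo (0 : ℝ) 1, g s =
      ∫ t in Ioo (0 : ℝ) 1, (A * B / (A * (1 - t) + B * t) ^ 2) • g (feynmanSubst A B t) := by
  conv_lhs => rw [← (bijOn_feynmanSubst hA hB).image_eq]
  rw [integral_image_eq_integral_abs_deriv_smul measurableSet_Ioo
    (fun t ht => (hasDerivAt_feynmanSubst hA hB ht).hasDerivWithinAt)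
    (bijOn_feynmanSubst hA hB).injOn]
  refine setIntegral_congr_fun measurableSet_Ioo fun t ht => ?_
  have := feynmanSubst_denom_pos hA hB ht
  rw [abs_of_pos (by positivity)]

lemma one_sub_feynmanSubst (hA : 0 < A) (hB : 0 < B) (ht : t ∈ Ioo (0 : ℝ) 1) :
    1 - feynmanSubst A B t = A * (1 - t) / (A * (1 - t) + B * t) := by
  have hD := feynmanSubst_denom_pos hA hB ht
  unfold feynmanSubst
  field_simp
  ring

lemma feynmanSubst_mul_add (hA : 0 < A) (hB : 0 < B) (ht : t ∈ Ioo (0 : ℝ) 1) :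
    feynmanSubst A B t * A + (1 - feynmanSubst A B t) * B = A * B / (A * (1 - t) + B * t) := by
  rw [one_sub_feynmanSubst hA hB ht, feynmanSubst]
  field_simp
  ring

lemma jacobian_smul_feynman_integrand (hA : 0 < A) (hB : 0 < B)
    (ht : t ∈ Ioo (0 : ℝ) 1) (μ ν : ℂ) :
    (A * B / (A * (1 - t) + B * t) ^ 2) •
        ((feynmanSubst A B t : ℂ) ^ (μ - 1) * ((1 - feynmanSubst A B t : ℝ) : ℂ) ^ (ν - 1) *
          ((feynmanSubst A B t * A + (1 - feynmanSubst A B t) * B : ℝ) : ℂ) ^ (-(μ + ν)))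
      = (A : ℂ) ^ (-μ) * (B : ℂ) ^ (-ν) * ((t : ℂ) ^ (μ - 1) * ((1 - t : ℝ) : ℂ) ^ (ν - 1)) := by
  rw [feynmanSubst_mul_add hA hB ht, one_sub_feynmanSubst hA hB ht, feynmanSubst,
    Complex.real_smul]
  exact ofReal_cpow_feynman_identity hA hB ht.1 (sub_pos.2 ht.2)
    (feynmanSubst_denom_pos hA hB ht) μ ν

end FeynmanSubst

/-- Proposition: for complex `μ, ν` with positive real parts and positive reals `A, B`,
`1/(A^μ B^ν) = Γ(μ+ν)/(Γ(μ)Γ(ν)) ∫₀¹ s^{μ-1}(1-s)^{ν-1}(sA+(1-s)B)^{-(μ+ν)} ds`. -/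
theorem stmt0 (μ ν : ℂ) (hμ : 0 < μ.re) (hν : 0 < ν.re)
    (A B : ℝ) (hA : 0 < A) (hB : 0 < B) :
    1 / ((A : ℂ) ^ μ * (B : ℂ) ^ ν) =
      Complex.Gamma (μ + ν) / (Complex.Gamma μ * Complex.Gamma ν) *
        ∫ s in Set.Ioo (0 : ℝ) 1,
          (s : ℂ) ^ (μ - 1) * ((1 - s : ℝ) : ℂ) ^ (ν - 1) *
            ((s * A + (1 - s) * B : ℝ) : ℂ) ^ (-(μ + ν)) := by
  rw [integral_Ioo_eq_integral_comp_feynmanSubst hA hB,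
    setIntegral_congr_fun measurableSet_Ioo
      fun t ht => jacobian_smul_feynman_integrand hA hB ht μ ν,
    integral_const_mul, integral_Ioo_cpow_mul_one_sub_cpow,
    Complex.betaIntegral_eq_Gamma_mul_div μ ν hμ hν, Complex.cpow_neg, Complex.cpow_neg]
  have hAμ : (A : ℂ) ^ μ ≠ 0 := by simp [Complex.cpow_eq_zero_iff, hA.ne']
  have hBν : (B : ℂ) ^ ν ≠ 0 := by simp [Complex.cpow_eq_zero_iff, hB.ne']
  have hΓμ := Complex.Gamma_ne_zero_of_re_pos hμ
  have hΓν := Complex.Gamma_ne_zero_of_re_pos hν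
  have hΓμν : Complex.Gamma (μ + ν) ≠ 0 :=
    Complex.Gamma_ne_zero_of_re_pos (by rw [Complex.add_re]; exact add_pos hμ hν)
  field_simp
end

section
/- Let a, b, c be real numbers with c > a + b and c not a nonpositive integer. Then the Gauss hypergeometric function satisfies ₂F₁(a, b; c; 1) = Γ(c) Γ(c - a - b) / (Γ(c - a) Γ(c - b)). -/
/-- The Gauss hypergeometric function, defined by its series. -/
noncomputable def hyp2F1 (a b c z : ℝ) : ℝ :=
  ∑' s : ℕ, ((ascPochhammer ℝ s).eval a * (ascPochhammer ℝ s).eval b /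
    (ascPochhammer ℝ s).eval c) * z ^ s / (Nat.factorial s : ℝ)

/-!
Gauss's argument. Write `F(c) = ₂F₁(a, b; c; 1)` and `t_s` for its terms. A termwise identity
telescopes to the contiguous relation `c (c - a - b) F(c) = (c - a) (c - b) F(c + 1)`; the
boundary term `s t_s` vanishes in the limit because Raabe's test gives
`t_s = O(s ^ (-1 - (c - a - b) / 2))`. Iterating,
`F(c) = (c - a)_n (c - b)_n / ((c)_n (c - a - b)_n) * F(c + n)` for every `n`. As `n → ∞`,
`F(c + n) → 1` by dominated convergence (Tannery's theorem), and the Pochhammer ratio tends to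
`Γ(c) Γ(c - a - b) / (Γ(c - a) Γ(c - b))` by Euler's limit formula `Γ(x) = lim n^x n! / (x)_(n+1)`.
-/

open Filter Topology Polynomial Asymptotics
open scoped Nat

lemma ascPochhammer_succ_eval_left {S : Type*} [CommSemiring S] (x : S) (n : ℕ) :
    (ascPochhammer S (n + 1)).eval x = x * (ascPochhammer S n).eval (x + 1) := by
  simp [ascPochhammer_succ_left, eval_comp]

lemma ascPochhammer_eval_eq_prod_range {S : Type*} [CommSemiring S] (x : S) (n : ℕ) :
    (ascPochhammer S n).eval x = ∏ j ∈ Finset.range n, (x + j) := by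
  induction n with
  | zero => simp
  | succ n ih => rw [ascPochhammer_succ_eval, ih, Finset.prod_range_succ]

lemma ascPochhammer_eval_ne_zero {R : Type*} [CommRing R] [IsDomain R] {x : R}
    (hx : ∀ k : ℕ, x ≠ -k) (n : ℕ) : (ascPochhammer R n).eval x ≠ 0 := by
  rw [Ne, ascPochhammer_eval_eq_zero_iff]
  rintro ⟨k, -, hk⟩
  exact hx k (by rw [hk, neg_neg])

lemma abs_ascPochhammer_eval_le {R : Type*} [CommRing R] [LinearOrder R] [IsStrictOrderedRing R]
    {x y : R} (h : |x| ≤ y) (n : ℕ) :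
    |(ascPochhammer R n).eval x| ≤ (ascPochhammer R n).eval y := by
  induction n with
  | zero => simp
  | succ n ih =>
    rw [ascPochhammer_succ_eval, ascPochhammer_succ_eval, abs_mul]
    have hxn : |x + n| ≤ y + n := (abs_add_le x n).trans (by simpa using h)
    exact mul_le_mul ih hxn (abs_nonneg _) ((abs_nonneg _).trans ih)

lemma tendsto_ascPochhammer_eval_atTop {n : ℕ} (hn : n ≠ 0) :
    Tendsto (fun x : ℝ => (ascPochhammer ℝ n).eval x) atTop atTop := by
  refine tendsto_atTop_of_leadingCoeff_nonneg _ ?_ ?_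
  · rw [degree_eq_natDegree (monic_ascPochhammer ℝ n).ne_zero, ascPochhammer_natDegree]
    exact_mod_cast Nat.pos_of_ne_zero hn
  · rw [(monic_ascPochhammer ℝ n).leadingCoeff]; exact zero_le_one

lemma Real.GammaSeq_eq_ascPochhammer (x : ℝ) (n : ℕ) :
    Real.GammaSeq x n = (n : ℝ) ^ x * n ! / (ascPochhammer ℝ (n + 1)).eval x := by
  rw [Real.GammaSeq, ascPochhammer_eval_eq_prod_range]

lemma Real.GammaSeq_mul_div_GammaSeq_mul {x y u v : ℝ} (hxy : x + y = u + v)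
    (hx : ∀ k : ℕ, x ≠ -k) (hy : ∀ k : ℕ, y ≠ -k) (hu : ∀ k : ℕ, u ≠ -k) (hv : ∀ k : ℕ, v ≠ -k)
    {n : ℕ} (hn : n ≠ 0) :
    Real.GammaSeq u n * Real.GammaSeq v n / (Real.GammaSeq x n * Real.GammaSeq y n) =
      (ascPochhammer ℝ (n + 1)).eval x * (ascPochhammer ℝ (n + 1)).eval y /
        ((ascPochhammer ℝ (n + 1)).eval u * (ascPochhammer ℝ (n + 1)).eval v) := by
  have hn0 : (0 : ℝ) < n := by exact_mod_cast Nat.pos_of_ne_zero hn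
  have hpow : (n : ℝ) ^ u * (n : ℝ) ^ v = (n : ℝ) ^ x * (n : ℝ) ^ y := by
    rw [← Real.rpow_add hn0, ← Real.rpow_add hn0, hxy]
  have := ascPochhammer_eval_ne_zero hx (n + 1)
  have := ascPochhammer_eval_ne_zero hy (n + 1)
  have := ascPochhammer_eval_ne_zero hu (n + 1)
  have := ascPochhammer_eval_ne_zero hv (n + 1)
  have : (n : ℝ) ^ x ≠ 0 := (Real.rpow_pos_of_pos hn0 x).ne'
  have : (n : ℝ) ^ y ≠ 0 := (Real.rpow_pos_of_pos hn0 y).ne'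
  simp only [Real.GammaSeq_eq_ascPochhammer]
  field_simp
  linear_combination hpow

lemma tendsto_ascPochhammer_ratio {x y u v : ℝ} (hxy : x + y = u + v) (hu : ∀ k : ℕ, u ≠ -k)
    (hv : ∀ k : ℕ, v ≠ -k) :
    Tendsto (fun n => (ascPochhammer ℝ n).eval x * (ascPochhammer ℝ n).eval y /
        ((ascPochhammer ℝ n).eval u * (ascPochhammer ℝ n).eval v)) atTop
      (𝓝 (Real.Gamma u * Real.Gamma v / (Real.Gamma x * Real.Gamma y))) := by
  -- At a pole of `Γ` both sides are `0`: Mathlib's `Γ` vanishes there, and so do the Pochhammer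
  -- symbols from some index on.
  by_cases hpole : ∃ k : ℕ, x = -k ∨ y = -k
  · obtain ⟨k, hk⟩ := hpole
    have hΓ : Real.Gamma x * Real.Gamma y = 0 := by
      rcases hk with rfl | rfl <;> simp [Real.Gamma_neg_nat_eq_zero]
    rw [hΓ, div_zero]
    refine tendsto_const_nhds.congr' ?_
    filter_upwards [eventually_gt_atTop k] with n hn
    rcases hk with rfl | rfl <;> simp [ascPochhammer_eval_neg_coe_nat_of_lt hn]
  · simp only [not_exists, not_or] at hpole
    have hx : ∀ k : ℕ, x ≠ -k := fun k => (hpole k).1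
    have hy : ∀ k : ℕ, y ≠ -k := fun k => (hpole k).2
    have hlim := ((Real.GammaSeq_tendsto_Gamma u).mul (Real.GammaSeq_tendsto_Gamma v)).div
      ((Real.GammaSeq_tendsto_Gamma x).mul (Real.GammaSeq_tendsto_Gamma y))
      (mul_ne_zero (Real.Gamma_ne_zero hx) (Real.Gamma_ne_zero hy))
    rw [← tendsto_add_atTop_iff_nat 1]
    refine hlim.congr' ?_
    filter_upwards [eventually_ne_atTop 0] with n hn
    exact Real.GammaSeq_mul_div_GammaSeq_mul hxy hx hy hu hv hn

lemma one_sub_div_mul_rpow_le {p : ℝ} (hp : 1 ≤ p) (n : ℕ) :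
    (1 - p / (n + 1)) * ((n : ℝ) + 1) ^ p ≤ (n : ℝ) ^ p := by
  have hn1 : (0 : ℝ) < n + 1 := by positivity
  have hbern := one_add_mul_self_le_rpow_one_add (s := -1 / (n + 1))
    (by rw [neg_div, neg_le_neg_iff, div_le_one hn1]; linarith) hp
  have hfrac : 1 + -1 / ((n : ℝ) + 1) = n / (n + 1) := by field_simp; ring
  calc (1 - p / (n + 1)) * ((n : ℝ) + 1) ^ p
      = (1 + p * (-1 / (n + 1))) * ((n : ℝ) + 1) ^ p := by ring
    _ ≤ (n / (n + 1)) ^ p * ((n : ℝ) + 1) ^ p := by rw [← hfrac]; gcongr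
    _ = n ^ p := by rw [Real.div_rpow (by positivity) hn1.le, div_mul_cancel₀ _ (by positivity)]

lemma isBigO_rpow_neg_of_abs_succ_le {f : ℕ → ℝ} {p : ℝ} (hp : 1 ≤ p)
    (hf : ∀ᶠ n : ℕ in atTop, |f (n + 1)| ≤ (1 - p / (n + 1)) * |f n|) :
    f =O[atTop] fun n => (n : ℝ) ^ (-p) := by
  obtain ⟨N, hN⟩ := eventually_atTop.mp hf
  have hbound : ∀ n, N ≤ n → |f n| * (n : ℝ) ^ p ≤ |f N| * (N : ℝ) ^ p := by
    intro n hn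
    induction n, hn using Nat.le_induction with
    | base => exact le_rfl
    | succ n hn ih =>
      calc |f (n + 1)| * ((n + 1 : ℕ) : ℝ) ^ p
          ≤ (1 - p / (n + 1)) * |f n| * ((n : ℝ) + 1) ^ p := by
            push_cast; gcongr; exact hN n hn
        _ = |f n| * ((1 - p / (n + 1)) * ((n : ℝ) + 1) ^ p) := by ring
        _ ≤ |f n| * (n : ℝ) ^ p := by gcongr; exact one_sub_div_mul_rpow_le hp n
        _ ≤ |f N| * (N : ℝ) ^ p := ih
  refine IsBigO.of_bound (|f N| * (N : ℝ) ^ p) ?_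
  filter_upwards [eventually_ge_atTop (max N 1)] with n hn
  have hn0 : (0 : ℝ) < n := by exact_mod_cast (le_max_right N 1).trans hn
  rw [Real.norm_eq_abs, Real.norm_of_nonneg (by positivity), Real.rpow_neg hn0.le,
    ← div_eq_mul_inv, le_div_iff₀ (by positivity)]
  exact hbound n ((le_max_left N 1).trans hn)

lemma tsum_sub_succ_eq_of_tendsto {G : Type*} [AddCommGroup G] [TopologicalSpace G]
    [IsTopologicalAddGroup G] [T2Space G] {u : ℕ → G} {l : G}
    (hs : Summable fun n => u n - u (n + 1)) (hu : Tendsto u atTop (𝓝 l)) :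
    ∑' n, (u n - u (n + 1)) = u 0 - l := by
  refine tendsto_nhds_unique hs.hasSum.tendsto_sum_nat ?_
  simp_rw [Finset.sum_range_sub']
  exact tendsto_const_nhds.sub hu

lemma ne_neg_natCast_of_pos {x : ℝ} (hx : 0 < x) (k : ℕ) : x ≠ -k := by
  have := k.cast_nonneg (α := ℝ)
  linarith

lemma add_natCast_ne_neg_natCast {c : ℝ} (hc : ∀ k : ℕ, c ≠ -k) (n k : ℕ) : c + n ≠ -k :=
  fun h => hc (k + n) (by push_cast; linarith)

noncomputable def gaussTerm (a b c : ℝ) (s : ℕ) : ℝ :=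
  (ascPochhammer ℝ s).eval a * (ascPochhammer ℝ s).eval b / ((ascPochhammer ℝ s).eval c * s !)

lemma hyp2F1_one_eq_tsum (a b c : ℝ) : hyp2F1 a b c 1 = ∑' s, gaussTerm a b c s := by
  simp only [hyp2F1, gaussTerm, one_pow, mul_one, div_div]

section GaussTerm

variable (a b : ℝ) {c : ℝ}

@[simp]
lemma gaussTerm_zero (c : ℝ) : gaussTerm a b c 0 = 1 := by simp [gaussTerm]

lemma gaussTerm_succ (hc : ∀ k : ℕ, c ≠ -k) (s : ℕ) :
    gaussTerm a b c (s + 1) = gaussTerm a b c s * ((a + s) * (b + s) / ((c + s) * (s + 1))) := by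
  have hcs : c + s ≠ 0 := fun h => hc s (eq_neg_of_add_eq_zero_left h)
  have := ascPochhammer_eval_ne_zero hc s
  simp only [gaussTerm, ascPochhammer_succ_eval, Nat.factorial_succ, Nat.cast_mul, Nat.cast_succ]
  field_simp

lemma gaussTerm_add_one_right (hc : ∀ k : ℕ, c ≠ -k) (s : ℕ) :
    gaussTerm a b (c + 1) s = gaussTerm a b c s * (c / (c + s)) := by
  have hcs : c + s ≠ 0 := fun h => hc s (eq_neg_of_add_eq_zero_left h)
  have hc1 : ∀ k : ℕ, c + 1 ≠ -k := by exact_mod_cast add_natCast_ne_neg_natCast hc 1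
  have h1 := ascPochhammer_eval_ne_zero hc1 s
  have h2 := ascPochhammer_eval_ne_zero hc s
  have key := ascPochhammer_succ_eval_left c s
  rw [ascPochhammer_succ_eval] at key
  simp only [gaussTerm]
  field_simp
  linear_combination (ascPochhammer ℝ s).eval a * (ascPochhammer ℝ s).eval b * key

lemma gaussTerm_contiguous (hc : ∀ k : ℕ, c ≠ -k) (s : ℕ) :
    c * (c - a - b) * gaussTerm a b c s - (c - a) * (c - b) * gaussTerm a b (c + 1) s =
      c * s * gaussTerm a b c s - c * (s + 1 : ℕ) * gaussTerm a b c (s + 1) := by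
  have hcs : c + s ≠ 0 := fun h => hc s (eq_neg_of_add_eq_zero_left h)
  rw [gaussTerm_succ a b hc, gaussTerm_add_one_right a b hc]
  push_cast
  field_simp
  ring

lemma eventually_abs_gaussTerm_succ_le {p : ℝ} (hc : ∀ k : ℕ, c ≠ -k) (hpc : p < 1 + (c - a - b)) :
    ∀ᶠ s : ℕ in atTop, |gaussTerm a b c (s + 1)| ≤ (1 - p / (s + 1)) * |gaussTerm a b c s| := by
  have hlin : Tendsto (fun s : ℕ => (c + 1 - p - a - b) * s + (c * (1 - p) - a * b)) atTop atTop :=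
    tendsto_atTop_add_const_right _ _ (tendsto_natCast_atTop_atTop.const_mul_atTop (by linarith))
  filter_upwards [hlin.eventually_ge_atTop 0,
    tendsto_natCast_atTop_atTop.eventually_ge_atTop (-a),
    tendsto_natCast_atTop_atTop.eventually_ge_atTop (-b),
    tendsto_natCast_atTop_atTop.eventually_gt_atTop (-c)] with s hs has hbs hcs
  have hratio_nonneg : 0 ≤ (a + s) * (b + s) / ((c + s) * (s + 1)) :=
    div_nonneg (mul_nonneg (by linarith) (by linarith)) (mul_nonneg (by linarith) (by positivity))
  have hratio_le : (a + s) * (b + s) / ((c + s) * (s + 1)) ≤ 1 - p / (s + 1) := by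
    have hs1 : (s : ℝ) + 1 ≠ 0 := by positivity
    rw [div_le_iff₀ (mul_pos (by linarith) (by positivity)),
      show (1 - p / (s + 1)) * ((c + s) * (s + 1)) = (c + s) * (s + 1 - p) by field_simp]
    nlinarith
  rw [gaussTerm_succ a b hc, abs_mul, abs_of_nonneg hratio_nonneg, mul_comm]
  exact mul_le_mul_of_nonneg_right hratio_le (abs_nonneg _)

lemma gaussTerm_isBigO (hc : ∀ k : ℕ, c ≠ -k) (h : a + b < c) :
    gaussTerm a b c =O[atTop] fun s => (s : ℝ) ^ (-(1 + (c - a - b) / 2)) :=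
  isBigO_rpow_neg_of_abs_succ_le (by linarith)
    (eventually_abs_gaussTerm_succ_le a b hc (by linarith))

lemma summable_gaussTerm (hc : ∀ k : ℕ, c ≠ -k) (h : a + b < c) : Summable (gaussTerm a b c) :=
  summable_of_isBigO_nat (Real.summable_nat_rpow.mpr (by linarith)) (gaussTerm_isBigO a b hc h)

lemma tendsto_natCast_mul_gaussTerm (hc : ∀ k : ℕ, c ≠ -k) (h : a + b < c) :
    Tendsto (fun s : ℕ => s * gaussTerm a b c s) atTop (𝓝 0) := by
  have hO : (fun s : ℕ => s * gaussTerm a b c s) =O[atTop]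
      fun s => (s : ℝ) ^ (-((c - a - b) / 2)) := by
    refine ((isBigO_refl (fun s : ℕ => (s : ℝ)) atTop).mul (gaussTerm_isBigO a b hc h)).congr'
      EventuallyEq.rfl ?_
    filter_upwards [eventually_gt_atTop 0] with s hs
    rw [show -((c - a - b) / 2) = -(1 + (c - a - b) / 2) + 1 by ring,
      Real.rpow_add_one (by positivity), mul_comm]
  exact hO.trans_tendsto ((tendsto_rpow_neg_atTop (by linarith)).comp tendsto_natCast_atTop_atTop)

lemma hyp2F1_one_contiguous (hc : ∀ k : ℕ, c ≠ -k) (h : a + b < c) :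
    c * (c - a - b) * hyp2F1 a b c 1 = (c - a) * (c - b) * hyp2F1 a b (c + 1) 1 := by
  have hc1 : ∀ k : ℕ, c + 1 ≠ -k := by exact_mod_cast add_natCast_ne_neg_natCast hc 1
  have hsum := (summable_gaussTerm a b hc h).mul_left (c * (c - a - b))
  have hsum1 := (summable_gaussTerm a b hc1 (by linarith)).mul_left ((c - a) * (c - b))
  have hu : Tendsto (fun s : ℕ => c * s * gaussTerm a b c s) atTop (𝓝 0) := by
    simpa [mul_assoc] using (tendsto_natCast_mul_gaussTerm a b hc h).const_mul c
  have htel := tsum_sub_succ_eq_of_tendsto ((hsum.sub hsum1).congr (gaussTerm_contiguous a b hc)) hu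
  rw [← tsum_congr (gaussTerm_contiguous a b hc), hsum.tsum_sub hsum1, tsum_mul_left,
    tsum_mul_left, ← hyp2F1_one_eq_tsum, ← hyp2F1_one_eq_tsum] at htel
  simpa [sub_eq_zero] using htel

lemma hyp2F1_one_mul_ascPochhammer (hc : ∀ k : ℕ, c ≠ -k) (h : a + b < c) (n : ℕ) :
    hyp2F1 a b c 1 * ((ascPochhammer ℝ n).eval c * (ascPochhammer ℝ n).eval (c - a - b)) =
      (ascPochhammer ℝ n).eval (c - a) * (ascPochhammer ℝ n).eval (c - b) *
        hyp2F1 a b (c + n) 1 := by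
  induction n with
  | zero => simp
  | succ n ih =>
    have hstep := hyp2F1_one_contiguous a b (add_natCast_ne_neg_natCast hc n)
      (by linarith [n.cast_nonneg (α := ℝ)])
    simp only [ascPochhammer_succ_eval, Nat.cast_succ, ← add_assoc]
    linear_combination (c + n) * (c - a - b + n) * ih +
      (ascPochhammer ℝ n).eval (c - a) * (ascPochhammer ℝ n).eval (c - b) * hstep

lemma abs_gaussTerm_le {a' b' c₀ : ℝ} (ha : |a| ≤ a') (hb : |b| ≤ b') (hc₀ : 0 < c₀) (hc : c₀ ≤ c)
    (s : ℕ) : |gaussTerm a b c s| ≤ gaussTerm a' b' c₀ s := by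
  have hP₀ := ascPochhammer_pos s c₀ hc₀
  have hP : (ascPochhammer ℝ s).eval c₀ ≤ (ascPochhammer ℝ s).eval c :=
    (le_abs_self _).trans (abs_ascPochhammer_eval_le (by rwa [abs_of_pos hc₀]) s)
  have hA := abs_ascPochhammer_eval_le ha s
  have hB := abs_ascPochhammer_eval_le hb s
  have := (abs_nonneg _).trans hA
  have := (abs_nonneg _).trans hB
  unfold gaussTerm
  rw [abs_div, abs_mul, abs_mul, abs_of_pos (hP₀.trans_le hP), Nat.abs_cast]
  gcongr

lemma tendsto_gaussTerm_add_nat (c : ℝ) (s : ℕ) :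
    Tendsto (fun n : ℕ => gaussTerm a b (c + n) s) atTop (𝓝 (if s = 0 then 1 else 0)) := by
  split_ifs with hs
  · simp [hs]
  · have hP := (tendsto_ascPochhammer_eval_atTop hs).comp
      (tendsto_atTop_add_const_left _ c tendsto_natCast_atTop_atTop)
    exact tendsto_const_nhds.div_atTop (hP.atTop_mul_const (by positivity))

lemma tendsto_hyp2F1_one_add_nat (c : ℝ) :
    Tendsto (fun n : ℕ => hyp2F1 a b (c + n) 1) atTop (𝓝 1) := by
  set M := max |a| |b|
  obtain ⟨m, hm⟩ := exists_nat_gt (2 * M - c)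
  have hM : 0 ≤ M := (abs_nonneg a).trans (le_max_left _ _)
  have hc₀ : 0 < c + m := by linarith
  have hsum := summable_gaussTerm M M (ne_neg_natCast_of_pos hc₀) (by linarith)
  have hbound : ∀ᶠ n : ℕ in atTop, ∀ s, ‖gaussTerm a b (c + n) s‖ ≤ gaussTerm M M (c + m) s := by
    filter_upwards [eventually_ge_atTop m] with n hn s
    exact abs_gaussTerm_le a b (le_max_left _ _) (le_max_right _ _) hc₀ (by gcongr) s
  simpa [hyp2F1_one_eq_tsum] using
    tendsto_tsum_of_dominated_convergence hsum (tendsto_gaussTerm_add_nat a b c) hbound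

end GaussTerm

/-- Gauss summation formula at `z = 1`. -/
theorem stmt4 (a b c : ℝ) (hc : ∀ k : ℕ, c ≠ -(k : ℝ)) (h : a + b < c) :
    hyp2F1 a b c 1 =
      Real.Gamma c * Real.Gamma (c - a - b) /
        (Real.Gamma (c - a) * Real.Gamma (c - b)) := by
  have hcab : ∀ k : ℕ, c - a - b ≠ -k := ne_neg_natCast_of_pos (by linarith)
  have hlim := (tendsto_ascPochhammer_ratio (x := c - a) (y := c - b) (by ring) hc hcab).mul
    (tendsto_hyp2F1_one_add_nat a b c)
  rw [mul_one] at hlim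
  refine tendsto_nhds_unique (tendsto_const_nhds.congr fun n => ?_) hlim
  rw [div_mul_eq_mul_div, eq_div_iff (mul_ne_zero (ascPochhammer_eval_ne_zero hc n)
    (ascPochhammer_eval_ne_zero hcab n))]
  exact hyp2F1_one_mul_ascPochhammer a b hc h n
end

section
/- For real a, b, c with c not a nonpositive integer, the function F(z) = ₂F₁(a, b; c; z) satisfies on (0,1) the hypergeometric differential equation z(1-z) F''(z) + (c - (a+b+1) z) F'(z) - a b F(z) = 0. -/
namespace FormalMultilinearSeries

variable {𝕜 : Type*} [NontriviallyNormedField 𝕜]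

def derivCoeff (κ : ℕ → 𝕜) (n : ℕ) : 𝕜 := (n + 1) * κ (n + 1)

theorem norm_derivCoeff_le_norm_derivSeries (κ : ℕ → 𝕜) (n : ℕ) :
    ‖derivCoeff κ n‖ ≤ ‖(ofScalars 𝕜 κ).derivSeries n‖ := by
  have h : derivCoeff κ n = (ofScalars 𝕜 κ).derivSeries.coeff n 1 := by
    rw [derivSeries_coeff_one, coeff_ofScalars, derivCoeff, nsmul_eq_mul, Nat.cast_succ]
  rw [norm_apply_eq_norm_coef, h]
  simpa using ((ofScalars 𝕜 κ).derivSeries.coeff n).le_opNorm 1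

theorem radius_ofScalars_le_radius_derivCoeff (κ : ℕ → 𝕜) :
    (ofScalars 𝕜 κ).radius ≤ (ofScalars 𝕜 (derivCoeff κ)).radius :=
  (radius_le_radius_derivSeries _).trans <| radius_le_of_le fun n => by
    rw [ofScalars_norm]
    exact norm_derivCoeff_le_norm_derivSeries κ n

variable [CompleteSpace 𝕜] {κ : ℕ → 𝕜} {z : 𝕜}

theorem hasSum_ofScalars_sum (hz : ‖z‖ₑ < (ofScalars 𝕜 κ).radius) :
    HasSum (fun n => κ n * z ^ n) ((ofScalars 𝕜 κ).sum z) := by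
  simpa only [ofScalars_apply_eq, smul_eq_mul] using
    (ofScalars 𝕜 κ).hasSum (by simpa using hz)

theorem hasSum_deriv_ofScalars_sum (hz : ‖z‖ₑ < (ofScalars 𝕜 κ).radius) :
    HasSum (fun n => derivCoeff κ n * z ^ n) (deriv (ofScalars 𝕜 κ).sum z) := by
  have hz' : ‖z‖ₑ < (ofScalars 𝕜 κ).derivSeries.radius :=
    hz.trans_le (radius_le_radius_derivSeries _)
  have h := (ContinuousLinearMap.apply 𝕜 𝕜 (1 : 𝕜)).hasSum
    ((ofScalars 𝕜 κ).derivSeries.hasSum (by simpa using hz'))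
  simp only [ContinuousLinearMap.apply_apply, apply_eq_pow_smul_coeff,
    _root_.smul_apply, derivSeries_coeff_one, coeff_ofScalars, nsmul_eq_mul,
    Nat.cast_succ, smul_eq_mul] at h
  rw [← fderiv_apply_one_eq_deriv, FormalMultilinearSeries.fderiv_sum hz]
  exact h.congr_fun fun n => mul_comm _ _

theorem deriv_ofScalars_sum (hz : ‖z‖ₑ < (ofScalars 𝕜 κ).radius) :
    deriv (ofScalars 𝕜 κ).sum z = (ofScalars 𝕜 (derivCoeff κ)).sum z :=
  (hasSum_deriv_ofScalars_sum hz).unique <|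
    hasSum_ofScalars_sum (hz.trans_le (radius_ofScalars_le_radius_derivCoeff κ))

theorem hasSum_deriv_deriv_ofScalars_sum (hz : ‖z‖ₑ < (ofScalars 𝕜 κ).radius) :
    HasSum (fun n => derivCoeff (derivCoeff κ) n * z ^ n)
      (deriv (deriv (ofScalars 𝕜 κ).sum) z) := by
  have hderiv : deriv (ofScalars 𝕜 κ).sum =ᶠ[nhds z] (ofScalars 𝕜 (derivCoeff κ)).sum := by
    filter_upwards [isOpen_lt continuous_enorm continuous_const |>.mem_nhds hz] with w hw
    exact deriv_ofScalars_sum hw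
  rw [hderiv.deriv_eq]
  exact hasSum_deriv_ofScalars_sum (hz.trans_le (radius_ofScalars_le_radius_derivCoeff κ))

end FormalMultilinearSeries

open FormalMultilinearSeries

theorem HasSum.pow_mul_of_shift {R : Type*} [CommRing R] [TopologicalSpace R] [IsTopologicalRing R]
    {f g : ℕ → R} {z s : R} (k : ℕ)
    (hf : HasSum (fun n => f n * z ^ n) s) (hgf : ∀ n, g (n + k) = f n) (hg : ∀ n < k, g n = 0) :
    HasSum (fun n => g n * z ^ n) (z ^ k * s) := by
  refine (hasSum_nat_add_iff' k).1 ?_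
  rw [Finset.sum_eq_zero fun n hn => by rw [hg n (Finset.mem_range.1 hn), zero_mul], sub_zero]
  simpa only [hgf, pow_add, mul_left_comm, mul_comm] using hf.mul_left (z ^ k)

section Hypergeometric

variable {𝕜 : Type*} [NontriviallyNormedField 𝕜] [CompleteSpace 𝕜] {κ : ℕ → 𝕜} {z : 𝕜}

theorem hasSum_hypergeometricOperator_ofScalars_sum (a b c : 𝕜)
    (hz : ‖z‖ₑ < (ofScalars 𝕜 κ).radius) :
    HasSum (fun n => ((n + 1) * (c + n) * κ (n + 1) - (a + n) * (b + n) * κ n) * z ^ n)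
      (z * (1 - z) * deriv (deriv (ofScalars 𝕜 κ).sum) z +
        (c - (a + b + 1) * z) * deriv (ofScalars 𝕜 κ).sum z - a * b * (ofScalars 𝕜 κ).sum z) := by
  set F := (ofScalars 𝕜 κ).sum
  have hF := hasSum_ofScalars_sum hz
  have hF' := hasSum_deriv_ofScalars_sum hz
  have hF'' := hasSum_deriv_deriv_ofScalars_sum hz
  have hzF' := hF'.pow_mul_of_shift (g := fun n => n * κ n) 1
    (fun n => by push_cast; rfl) (by simp)
  have hzF'' := hF''.pow_mul_of_shift (g := fun n => n * (n + 1) * κ (n + 1)) 1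
    (fun n => by simp only [derivCoeff]; push_cast; ring) (by simp)
  have hz2F'' := hF''.pow_mul_of_shift (g := fun n => (n - 1) * n * κ n) 2
    (fun n => by simp only [derivCoeff]; push_cast; ring) (by intro n hn; interval_cases n <;> simp)
  have hsum := (((hzF''.sub hz2F'').add (hF'.mul_left c)).sub
    (hzF'.mul_left (a + b + 1))).sub (hF.mul_left (a * b))
  rw [show z * (1 - z) * deriv (deriv F) z + (c - (a + b + 1) * z) * deriv F z - a * b * F z =
      z ^ 1 * deriv (deriv F) z - z ^ 2 * deriv (deriv F) z + c * deriv F z -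
        (a + b + 1) * (z ^ 1 * deriv F z) - a * b * F z by ring]
  exact hsum.congr_fun fun n => by simp only [derivCoeff]; ring

end Hypergeometric

theorem mul_ordinaryHypergeometricCoefficient_succ {𝕜 : Type*} [Field 𝕜] [CharZero 𝕜]
    (a b c : 𝕜) (hc : ∀ k : ℕ, c ≠ -k) (n : ℕ) :
    (n + 1) * (c + n) * ordinaryHypergeometricCoefficient a b c (n + 1) =
      (a + n) * (b + n) * ordinaryHypergeometricCoefficient a b c n := by
  have hpoch : (ascPochhammer 𝕜 n).eval c ≠ 0 := by
    rw [Ne, ascPochhammer_eval_eq_zero_iff]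
    rintro ⟨k, -, hk⟩
    exact hc k (by rw [hk, neg_neg])
  have hcn : c + n ≠ 0 := fun h => hc n (eq_neg_of_add_eq_zero_left h)
  rw [ordinaryHypergeometricCoefficient, ordinaryHypergeometricCoefficient, ascPochhammer_succ_eval,
    ascPochhammer_succ_eval, ascPochhammer_succ_eval, Nat.factorial_succ]
  push_cast
  field_simp

theorem one_le_radius_ordinaryHypergeometricSeries {𝕂 : Type*} (𝔸 : Type*) [RCLike 𝕂]
    [NormedDivisionRing 𝔸] [NormedAlgebra 𝕂 𝔸] (a b c : 𝕂) (hc : ∀ k : ℕ, c ≠ -k) :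
    1 ≤ (ordinaryHypergeometricSeries 𝔸 a b c).radius := by
  by_cases ha : ∃ k : ℕ, a = -k
  · obtain ⟨k, rfl⟩ := ha
    simp [ordinaryHypergeometric_radius_top_of_neg_nat₁]
  by_cases hb : ∃ k : ℕ, b = -k
  · obtain ⟨k, rfl⟩ := hb
    simp [ordinaryHypergeometric_radius_top_of_neg_nat₂]
  push Not at ha hb
  refine (ordinaryHypergeometricSeries_radius_eq_one 𝔸 a b c fun k => ?_).ge
  exact ⟨fun h => ha k (neg_eq_iff_eq_neg.1 h.symm), fun h => hb k (neg_eq_iff_eq_neg.1 h.symm),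
    fun h => hc k (neg_eq_iff_eq_neg.1 h.symm)⟩

theorem hyp2F1_eq_ordinaryHypergeometric (a b c : ℝ) : hyp2F1 a b c = ₂F₁ a b c := by
  ext z
  rw [ordinaryHypergeometric, ordinaryHypergeometric_sum_eq]
  refine tsum_congr fun n => ?_
  rw [smul_eq_mul]
  ring

/-- The hypergeometric differential equation on `(0,1)`. -/
theorem stmt8 (a b c : ℝ) (hc : ∀ k : ℕ, c ≠ -(k : ℝ)) (z : ℝ)
    (hz : z ∈ Set.Ioo (0 : ℝ) 1) :
    z * (1 - z) * deriv (deriv (hyp2F1 a b c)) z +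
      (c - (a + b + 1) * z) * deriv (hyp2F1 a b c) z - a * b * hyp2F1 a b c z = 0 := by
  have hz_lt_radius : ‖z‖ₑ < (ofScalars ℝ (ordinaryHypergeometricCoefficient a b c)).radius := by
    refine lt_of_lt_of_le ?_ (one_le_radius_ordinaryHypergeometricSeries ℝ a b c hc)
    rw [Real.enorm_eq_ofReal hz.1.le]
    exact ENNReal.ofReal_lt_one.2 hz.2
  have hsum := hasSum_hypergeometricOperator_ofScalars_sum a b c hz_lt_radius
  simp only [mul_ordinaryHypergeometricCoefficient_succ a b c hc, sub_self, zero_mul] at hsum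
  rw [hyp2F1_eq_ordinaryHypergeometric]
  exact hsum.unique hasSum_zero
end

section
/- Let n ≥ 2, 0 < σ < 1, and F(s) = ₂F₁((n-2σ)/4, (n-2σ)/4; n/2; s). Then lim_{s→1⁻} s^{n/2} (1-s)^{1-σ} F(s) F'(s) = Γ(n/2)² Γ(σ) Γ(1-σ) / ( Γ((n-2σ)/4)² Γ((n+2σ)/4)² ). -/
open Real MeasureTheory Set Filter
open scoped Topology Nat

lemma rpow_mul_one_sub_rpow_nonneg {t : ℝ} (ht : t ∈ Ioo (0 : ℝ) 1) (p q : ℝ) :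
    0 ≤ t ^ p * (1 - t) ^ q := by
  have := sub_pos.2 ht.2
  have := ht.1
  positivity

lemma lintegral_rpow_mul_one_sub_rpow {p q : ℝ} (hp : 0 < p) (hq : 0 < q) :
    ∫⁻ t in Ioo (0 : ℝ) 1, ENNReal.ofReal (t ^ (p - 1) * (1 - t) ^ (q - 1)) =
      ENNReal.ofReal (ProbabilityTheory.beta p q) := by
  have hB := ProbabilityTheory.beta_pos hp hq
  have h := ProbabilityTheory.lintegral_betaPDF_eq_one hp hq
  rw [ProbabilityTheory.lintegral_betaPDF] at h
  simp_rw [mul_assoc, ENNReal.ofReal_mul (one_div_pos.2 hB).le] at h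
  rw [lintegral_const_mul' _ _ ENNReal.ofReal_ne_top,
    ← ENNReal.eq_div_iff (by simpa using hB) ENNReal.ofReal_ne_top] at h
  rw [h, ← ENNReal.ofReal_one, ← ENNReal.ofReal_div_of_pos (by positivity)]
  simp

lemma integrableOn_rpow_mul_one_sub_rpow {p q : ℝ} (hp : 0 < p) (hq : 0 < q) :
    IntegrableOn (fun t : ℝ ↦ t ^ (p - 1) * (1 - t) ^ (q - 1)) (Ioo 0 1) := by
  refine ⟨by fun_prop, ?_⟩
  rw [hasFiniteIntegral_iff_ofReal (ae_restrict_of_forall_mem measurableSet_Ioo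
    fun t ht ↦ rpow_mul_one_sub_rpow_nonneg ht _ _), lintegral_rpow_mul_one_sub_rpow hp hq]
  exact ENNReal.ofReal_lt_top

lemma integral_rpow_mul_one_sub_rpow {p q : ℝ} (hp : 0 < p) (hq : 0 < q) :
    ∫ t in Ioo (0 : ℝ) 1, t ^ (p - 1) * (1 - t) ^ (q - 1) =
      Gamma p * Gamma q / Gamma (p + q) := by
  rw [integral_eq_lintegral_of_nonneg_ae (ae_restrict_of_forall_mem measurableSet_Ioo
    fun t ht ↦ rpow_mul_one_sub_rpow_nonneg ht _ _) (by fun_prop),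
    lintegral_rpow_mul_one_sub_rpow hp hq,
    ENNReal.toReal_ofReal (ProbabilityTheory.beta_pos hp hq).le, ProbabilityTheory.beta]

lemma Gamma_add_nat_eq_mul_ascPochhammer {x : ℝ} (hx : 0 < x) (k : ℕ) :
    Gamma (x + k) = Gamma x * (ascPochhammer ℝ k).eval x := by
  induction k with
  | zero => simp
  | succ k ih =>
    rw [Nat.cast_succ, ← add_assoc, Gamma_add_one (by positivity), ih, ascPochhammer_succ_eval]
    ring

lemma ascPochhammer_eval_div_factorial (a : ℝ) (n : ℕ) :
    (ascPochhammer ℝ n).eval a / n ! = Ring.choose (a + n - 1) n := by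
  rw [← Ring.multichoose_eq, div_eq_iff (by positivity), mul_comm, ← nsmul_eq_mul,
    Ring.factorial_nsmul_multichoose_eq_ascPochhammer, Polynomial.ascPochhammer_smeval_eq_eval]

lemma hasSum_ascPochhammer_mul_pow (a : ℝ) {x : ℝ} (hx : |x| < 1) :
    HasSum (fun k ↦ (ascPochhammer ℝ k).eval a / k ! * x ^ k) ((1 - x) ^ (-a)) := by
  have h := (one_div_one_sub_rpow_hasFPowerSeriesOnBall_zero a).hasSum
    (y := x) (by simpa [enorm_eq_nnnorm, ← NNReal.coe_lt_coe] using hx)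
  rw [rpow_neg (by linarith [le_abs_self x]), inv_eq_one_div]
  simpa [FormalMultilinearSeries.ofScalars_apply_eq, ascPochhammer_eval_div_factorial, mul_comm]
    using h

noncomputable def eulerIntegrand (a b c z t : ℝ) : ℝ :=
  t ^ (b - 1) * (1 - t) ^ (c - b - 1) * (1 - z * t) ^ (-a)

noncomputable def eulerIntegral (a b c z : ℝ) : ℝ :=
  ∫ t in Ioo (0 : ℝ) 1, eulerIntegrand a b c z t

@[fun_prop]
lemma measurable_eulerIntegrand (a b c z : ℝ) : Measurable (eulerIntegrand a b c z) := by
  unfold eulerIntegrand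
  fun_prop

lemma one_sub_abs_le_one_sub_mul {t : ℝ} (ht : t ∈ Ioo (0 : ℝ) 1) (z : ℝ) :
    1 - |z| ≤ 1 - z * t := by
  nlinarith [le_abs_self z, abs_nonneg z, ht.1, ht.2]

lemma norm_eulerIntegrand_le {a b c z r t : ℝ} (ha : 0 ≤ a) (hr : r < 1) (hzr : |z| ≤ r)
    (ht : t ∈ Ioo (0 : ℝ) 1) :
    ‖eulerIntegrand a b c z t‖ ≤ t ^ (b - 1) * (1 - t) ^ (c - b - 1) * (1 - r) ^ (-a) := by
  have hzt : 1 - r ≤ 1 - z * t := by linarith [one_sub_abs_le_one_sub_mul ht z]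
  have h0 := rpow_mul_one_sub_rpow_nonneg ht (b - 1) (c - b - 1)
  rw [eulerIntegrand, norm_mul, Real.norm_of_nonneg h0,
    Real.norm_of_nonneg (rpow_nonneg (by linarith) _)]
  exact mul_le_mul_of_nonneg_left
    (rpow_le_rpow_of_nonpos (by linarith) hzt (by linarith : -a ≤ 0)) h0

lemma integrableOn_eulerIntegrand {a b c z : ℝ} (ha : 0 ≤ a) (hb : 0 < b) (hbc : b < c)
    (hz : |z| < 1) : IntegrableOn (eulerIntegrand a b c z) (Ioo 0 1) :=
  ((integrableOn_rpow_mul_one_sub_rpow hb (sub_pos.2 hbc)).mul_const _).mono' (by fun_prop)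
    (ae_restrict_of_forall_mem measurableSet_Ioo fun _ ht ↦
      norm_eulerIntegrand_le ha hz le_rfl ht)

lemma hasSum_eulerIntegrand (a : ℝ) {b c w t : ℝ} (hw : |w| < 1) (ht : t ∈ Ioo (0 : ℝ) 1) :
    HasSum (fun k : ℕ ↦ (ascPochhammer ℝ k).eval a / k ! * w ^ k *
        (t ^ (b + k - 1) * (1 - t) ^ (c - b - 1)))
      (eulerIntegrand a b c w t) := by
  have hwt : |w * t| < 1 := by
    rw [abs_mul, abs_of_pos ht.1]
    nlinarith [abs_nonneg w, ht.1, ht.2]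
  refine ((hasSum_ascPochhammer_mul_pow a hwt).mul_left
    (t ^ (b - 1) * (1 - t) ^ (c - b - 1))).congr_fun fun k ↦ ?_
  rw [add_sub_right_comm, rpow_add ht.1, rpow_natCast, mul_pow]
  ring

lemma integral_eulerIntegrand_term {a b c : ℝ} (hb : 0 < b) (hbc : b < c) (w : ℝ) (k : ℕ) :
    ∫ t in Ioo (0 : ℝ) 1, (ascPochhammer ℝ k).eval a / k ! * w ^ k *
        (t ^ (b + k - 1) * (1 - t) ^ (c - b - 1)) =
      Gamma b * Gamma (c - b) / Gamma c *
        ((ascPochhammer ℝ k).eval a * (ascPochhammer ℝ k).eval b /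
          (ascPochhammer ℝ k).eval c * w ^ k / k !) := by
  have hc : 0 < c := hb.trans hbc
  have hbeta := integral_rpow_mul_one_sub_rpow (p := b + k) (q := c - b) (by positivity)
    (sub_pos.2 hbc)
  rw [show b + k + (c - b) = c + k by ring, sub_sub] at hbeta
  rw [integral_const_mul, sub_sub, hbeta, Gamma_add_nat_eq_mul_ascPochhammer hb,
    Gamma_add_nat_eq_mul_ascPochhammer hc]
  have := (Gamma_pos_of_pos hc).ne'
  have := (ascPochhammer_pos k c hc).ne'
  field_simp

theorem hyp2F1_eq_eulerIntegral {a b c z : ℝ} (ha : 0 < a) (hb : 0 < b) (hbc : b < c)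
    (hz : |z| < 1) :
    hyp2F1 a b c z = Gamma c / (Gamma b * Gamma (c - b)) * eulerIntegral a b c z := by
  have hz' : |(|z|)| < 1 := by rwa [abs_abs]
  have hsum : HasSum (fun k : ℕ ↦ Gamma b * Gamma (c - b) / Gamma c *
      ((ascPochhammer ℝ k).eval a * (ascPochhammer ℝ k).eval b /
          (ascPochhammer ℝ k).eval c * z ^ k / k !)) (eulerIntegral a b c z) := by
    simp_rw [← integral_eulerIntegrand_term hb hbc]
    refine hasSum_integral_of_dominated_convergence
      (fun k t ↦ (ascPochhammer ℝ k).eval a / k ! * |z| ^ k *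
        (t ^ (b + k - 1) * (1 - t) ^ (c - b - 1))) (fun k ↦ by fun_prop) (fun k ↦ ?_)
      (ae_restrict_of_forall_mem measurableSet_Ioo fun t ht ↦
        (hasSum_eulerIntegrand a hz' ht).summable) ?_
      (ae_restrict_of_forall_mem measurableSet_Ioo fun t ht ↦ hasSum_eulerIntegrand a hz ht)
    · refine ae_restrict_of_forall_mem measurableSet_Ioo fun t ht ↦ ?_
      rw [norm_mul, norm_mul, norm_pow, Real.norm_eq_abs z,
        Real.norm_of_nonneg (rpow_mul_one_sub_rpow_nonneg ht _ _),
        Real.norm_of_nonneg (div_nonneg (ascPochhammer_pos k a ha).le (by positivity))]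
    · exact (integrableOn_eulerIntegrand ha.le hb hbc hz').congr_fun_ae
        (ae_restrict_of_forall_mem measurableSet_Ioo fun t ht ↦
          (hasSum_eulerIntegrand a hz' ht).tsum_eq.symm)
  have hK : Gamma b * Gamma (c - b) / Gamma c ≠ 0 := by
    have := Gamma_pos_of_pos hb
    have := Gamma_pos_of_pos (sub_pos.2 hbc)
    have := Gamma_pos_of_pos (hb.trans hbc)
    positivity
  have h := hsum.mul_left (Gamma b * Gamma (c - b) / Gamma c)⁻¹
  simp_rw [← mul_assoc, inv_mul_cancel₀ hK, one_mul] at h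
  rw [hyp2F1, h.tsum_eq, inv_div]

lemma hasDerivAt_eulerIntegrand (a b c t x : ℝ) (hxt : 1 - x * t ≠ 0) (ht : t ≠ 0) :
    HasDerivAt (eulerIntegrand a b c · t) (a * eulerIntegrand (a + 1) (b + 1) (c + 1) x t) x := by
  refine ((((hasDerivAt_id x).mul_const t).const_sub 1).rpow_const (p := -a) (Or.inl hxt)
    |>.const_mul (t ^ (b - 1) * (1 - t) ^ (c - b - 1))).congr_deriv ?_
  rw [eulerIntegrand, add_sub_cancel_right, add_sub_add_right_eq_sub, neg_add', id,
    ← div_mul_cancel₀ (t ^ b) ht, ← rpow_sub_one ht]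
  ring

theorem hasDerivAt_eulerIntegral {a b c z : ℝ} (ha : 0 ≤ a) (hb : 0 < b) (hbc : b < c)
    (hz : |z| < 1) :
    HasDerivAt (eulerIntegral a b c) (a * eulerIntegral (a + 1) (b + 1) (c + 1) z) z := by
  obtain ⟨r, hzr, hr⟩ := exists_between hz
  replace hzr : z ∈ Ioo (-r) r := abs_lt.1 hzr
  unfold eulerIntegral
  rw [← integral_const_mul]
  refine (hasDerivAt_integral_of_dominated_loc_of_deriv_le (μ := volume.restrict (Ioo 0 1))
    (F' := fun x t ↦ a * eulerIntegrand (a + 1) (b + 1) (c + 1) x t)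
    (bound := fun t ↦ a * (t ^ (b + 1 - 1) * (1 - t) ^ (c + 1 - (b + 1) - 1) *
      (1 - r) ^ (-(a + 1))))
    (Ioo_mem_nhds hzr.1 hzr.2) (.of_forall fun x ↦ by fun_prop)
    (integrableOn_eulerIntegrand ha hb hbc hz) (by fun_prop) ?_ ?_ ?_).2
  · refine ae_restrict_of_forall_mem measurableSet_Ioo fun t ht x hx ↦ ?_
    rw [norm_mul, Real.norm_of_nonneg ha]
    exact mul_le_mul_of_nonneg_left (norm_eulerIntegrand_le (by linarith) hr
      (abs_le.2 ⟨hx.1.le, hx.2.le⟩) ht) ha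
  · rw [add_sub_add_right_eq_sub]
    exact ((integrableOn_rpow_mul_one_sub_rpow (by linarith) (sub_pos.2 hbc)).mul_const _
      ).const_mul a
  · refine ae_restrict_of_forall_mem measurableSet_Ioo fun t ht x hx ↦ ?_
    refine hasDerivAt_eulerIntegrand a b c t x ?_ ht.1.ne'
    linarith [one_sub_abs_le_one_sub_mul ht x, abs_lt.2 hx]

theorem hasDerivAt_hyp2F1 {a b c z : ℝ} (ha : 0 < a) (hb : 0 < b) (hbc : b < c)
    (hz : |z| < 1) :
    HasDerivAt (hyp2F1 a b c) (a * b / c * hyp2F1 (a + 1) (b + 1) (c + 1) z) z := by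
  have hc : 0 < c := hb.trans hbc
  have hrep : hyp2F1 a b c =ᶠ[𝓝 z] fun w ↦ Gamma c / (Gamma b * Gamma (c - b)) *
      eulerIntegral a b c w :=
    Filter.eventually_of_mem ((isOpen_lt continuous_abs continuous_const).mem_nhds hz)
      fun w hw ↦ hyp2F1_eq_eulerIntegral ha hb hbc hw
  refine (((hasDerivAt_eulerIntegral ha.le hb hbc hz).const_mul _).congr_of_eventuallyEq
    hrep).congr_deriv ?_
  rw [hyp2F1_eq_eulerIntegral (by linarith) (by linarith) (by linarith) hz,
    show c + 1 - (b + 1) = c - b by ring, Gamma_add_one hc.ne', Gamma_add_one hb.ne']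
  have := (Gamma_pos_of_pos hb).ne'
  have := (Gamma_pos_of_pos (sub_pos.2 hbc)).ne'
  field_simp

lemma one_sub_mul_pos {s u : ℝ} (hs : s < 1) (hu : u ∈ Ioo (0 : ℝ) 1) : 0 < 1 - s * u := by
  nlinarith [mul_pos hu.1 (sub_pos.2 hs), hu.2]

lemma one_sub_div_one_sub_mul {s u : ℝ} (hD : 1 - s * u ≠ 0) :
    1 - (1 - u) / (1 - s * u) = u * (1 - s) / (1 - s * u) := by
  rw [eq_div_iff hD, sub_mul, div_mul_cancel₀ _ hD]
  ring

lemma one_sub_mul_div_one_sub_mul {s u : ℝ} (hD : 1 - s * u ≠ 0) :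
    1 - s * ((1 - u) / (1 - s * u)) = (1 - s) / (1 - s * u) := by
  rw [eq_div_iff hD, sub_mul, mul_assoc, div_mul_cancel₀ _ hD]
  ring

lemma abs_deriv_mul_eulerIntegrand_mobius (a b c : ℝ) {s u : ℝ} (hs : s < 1)
    (hu : u ∈ Ioo (0 : ℝ) 1) :
    |(s - 1) / (1 - s * u) ^ 2| * eulerIntegrand a b c s ((1 - u) / (1 - s * u)) =
      (1 - s) ^ (c - a - b) * eulerIntegrand (c - a) (c - b) c s u := by
  have hC : 0 < 1 - s := sub_pos.2 hs
  have hD := one_sub_mul_pos hs hu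
  have hV : 0 < 1 - u := sub_pos.2 hu.2
  have hU := hu.1
  have habs : |(s - 1) / (1 - s * u) ^ 2| = (1 - s) / (1 - s * u) ^ 2 := by
    rw [abs_div, abs_sub_comm, abs_of_pos hC, abs_of_pos (by positivity)]
  rw [eulerIntegrand, eulerIntegrand, habs, one_sub_div_one_sub_mul hD.ne',
    one_sub_mul_div_one_sub_mul hD.ne', div_rpow hV.le hD.le, div_rpow (by positivity) hD.le,
    div_rpow hC.le hD.le, mul_rpow hU.le hC.le, show c - (c - b) - 1 = b - 1 by ring,
    show c - a - b = 1 + (c - b - 1) + -a by ring, rpow_add hC, rpow_add hC, rpow_one,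
    show -(c - a) = -((2 : ℕ) + (b - 1) + (c - b - 1) + -a) by push_cast; ring,
    rpow_neg hD.le ((2 : ℕ) + (b - 1) + (c - b - 1) + -a), rpow_add hD, rpow_add hD, rpow_add hD,
    rpow_natCast]
  have := rpow_pos_of_pos hD (b - 1)
  have := rpow_pos_of_pos hD (c - b - 1)
  have := rpow_pos_of_pos hD (-a)
  field_simp

theorem eulerIntegral_eq_one_sub_rpow_mul (a b c : ℝ) {s : ℝ} (hs : s < 1) :
    eulerIntegral a b c s = (1 - s) ^ (c - a - b) * eulerIntegral (c - a) (c - b) c s := by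
  set f : ℝ → ℝ := fun u ↦ (1 - u) / (1 - s * u)
  have hmaps : MapsTo f (Ioo 0 1) (Ioo 0 1) := fun u hu ↦ by
    have hD := one_sub_mul_pos hs hu
    refine ⟨div_pos (sub_pos.2 hu.2) hD, (div_lt_one hD).2 ?_⟩
    nlinarith [mul_pos hu.1 (sub_pos.2 hs)]
  have hinv : LeftInvOn f f (Ioo 0 1) := fun u hu ↦ by
    have hD := (one_sub_mul_pos hs hu).ne'
    simp only [f]
    rw [one_sub_div_one_sub_mul hD, one_sub_mul_div_one_sub_mul hD,
      div_div_div_cancel_right₀ hD, mul_div_cancel_right₀ _ (sub_pos.2 hs).ne']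
  have hbij : BijOn f (Ioo 0 1) (Ioo 0 1) := InvOn.bijOn ⟨hinv, hinv⟩ hmaps hmaps
  have hderiv : ∀ u ∈ Ioo (0 : ℝ) 1,
      HasDerivWithinAt f ((s - 1) / (1 - s * u) ^ 2) (Ioo 0 1) u := fun u hu ↦ by
    refine ((((hasDerivAt_id u).const_sub 1).div ((hasDerivAt_id u).const_mul s |>.const_sub 1)
      (one_sub_mul_pos hs hu).ne').congr_deriv ?_).hasDerivWithinAt
    simp only [id]
    ring
  rw [eulerIntegral, ← hbij.image_eq,
    integral_image_eq_integral_abs_deriv_smul measurableSet_Ioo hderiv hbij.injOn,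
    eulerIntegral, ← integral_const_mul]
  exact setIntegral_congr_fun measurableSet_Ioo fun u hu ↦
    abs_deriv_mul_eulerIntegrand_mobius a b c hs hu

theorem hyp2F1_eq_one_sub_rpow_mul_hyp2F1 {a b c z : ℝ} (ha : 0 < a) (hb : 0 < b) (hac : a < c)
    (hbc : b < c) (hz : |z| < 1) :
    hyp2F1 a b c z = (1 - z) ^ (c - a - b) * hyp2F1 (c - a) (c - b) c z := by
  rw [hyp2F1_eq_eulerIntegral ha hb hbc hz,
    hyp2F1_eq_eulerIntegral (sub_pos.2 hac) (sub_pos.2 hbc) (by linarith) hz,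
    eulerIntegral_eq_one_sub_rpow_mul a b c (abs_lt.1 hz).2, sub_sub_cancel]
  ring

lemma eulerIntegrand_one {a b c t : ℝ} (ht : t ∈ Ioo (0 : ℝ) 1) :
    eulerIntegrand a b c 1 t = t ^ (b - 1) * (1 - t) ^ (c - a - b - 1) := by
  rw [eulerIntegrand, one_mul, mul_assoc, ← rpow_add (sub_pos.2 ht.2)]
  ring_nf

lemma eulerIntegral_one {a b c : ℝ} (hb : 0 < b) (hab : a + b < c) :
    eulerIntegral a b c 1 = Gamma b * Gamma (c - a - b) / Gamma (c - a) := by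
  have hbeta := integral_rpow_mul_one_sub_rpow hb (by linarith : 0 < c - a - b)
  rw [show b + (c - a - b) = c - a by ring] at hbeta
  rw [eulerIntegral, ← hbeta]
  exact setIntegral_congr_fun measurableSet_Ioo fun t ht ↦ eulerIntegrand_one ht

lemma tendsto_eulerIntegral_one {a b c : ℝ} (ha : 0 ≤ a) (hb : 0 < b) (hab : a + b < c) :
    Tendsto (eulerIntegral a b c) (𝓝[<] 1) (𝓝 (eulerIntegral a b c 1)) := by
  refine tendsto_integral_filter_of_dominated_convergence (eulerIntegrand a b c 1)
    (.of_forall fun s ↦ by fun_prop) ?_ ?_ ?_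
  · filter_upwards [Ioo_mem_nhdsLT (zero_lt_one' ℝ)] with s hs
    refine ae_restrict_of_forall_mem measurableSet_Ioo fun t ht ↦ ?_
    have hst : 1 - t ≤ 1 - s * t := by nlinarith [hs.2, ht.1]
    have h0 := rpow_mul_one_sub_rpow_nonneg ht (b - 1) (c - b - 1)
    rw [eulerIntegrand, eulerIntegrand, one_mul, norm_mul, Real.norm_of_nonneg h0,
      Real.norm_of_nonneg (rpow_nonneg (by linarith [sub_pos.2 ht.2]) _)]
    exact mul_le_mul_of_nonneg_left
      (rpow_le_rpow_of_nonpos (sub_pos.2 ht.2) hst (by linarith : -a ≤ 0)) h0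
  · exact (integrableOn_rpow_mul_one_sub_rpow hb (by linarith : 0 < c - a - b)).congr_fun
      (fun t ht ↦ (eulerIntegrand_one ht).symm) measurableSet_Ioo
  · refine ae_restrict_of_forall_mem measurableSet_Ioo fun t ht ↦ ?_
    have hcont : ContinuousAt (eulerIntegrand a b c · t) 1 :=
      continuousAt_const.mul <| (continuousAt_const.sub (continuousAt_id.mul continuousAt_const)
        ).rpow_const (Or.inl (by simpa using (sub_pos.2 ht.2).ne'))
    exact hcont.tendsto.mono_left nhdsWithin_le_nhds

theorem tendsto_hyp2F1_one {a b c : ℝ} (ha : 0 < a) (hb : 0 < b) (hab : a + b < c) :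
    Tendsto (hyp2F1 a b c) (𝓝[<] 1)
      (𝓝 (Gamma c * Gamma (c - a - b) / (Gamma (c - a) * Gamma (c - b)))) := by
  have hbc : b < c := by linarith
  have hlim := (tendsto_eulerIntegral_one ha.le hb hab).const_mul
    (Gamma c / (Gamma b * Gamma (c - b)))
  rw [eulerIntegral_one hb hab] at hlim
  have := (Gamma_pos_of_pos hb).ne'
  have := (Gamma_pos_of_pos (sub_pos.2 hbc)).ne'
  have := (Gamma_pos_of_pos (by linarith : 0 < c - a)).ne'
  convert hlim.congr' ?_ using 2
  · field_simp
  · filter_upwards [Ioo_mem_nhdsLT (zero_lt_one' ℝ)] with s hs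
    exact (hyp2F1_eq_eulerIntegral ha hb hbc (abs_lt.2 ⟨by linarith [hs.1], hs.2⟩)).symm

theorem one_sub_rpow_mul_deriv_hyp2F1 {a b c s : ℝ} (ha : 0 < a) (hb : 0 < b) (hac : a < c)
    (hbc : b < c) (hs : |s| < 1) :
    (1 - s) ^ (a + b + 1 - c) * deriv (hyp2F1 a b c) s =
      a * b / c * hyp2F1 (c - a) (c - b) (c + 1) s := by
  rw [(hasDerivAt_hyp2F1 ha hb hbc hs).deriv,
    hyp2F1_eq_one_sub_rpow_mul_hyp2F1 (by linarith) (by linarith) (by linarith) (by linarith) hs,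
    show c + 1 - (a + 1) = c - a by ring, show c + 1 - (b + 1) = c - b by ring, mul_left_comm,
    ← mul_assoc ((1 - s) ^ (a + b + 1 - c)), ← rpow_add (sub_pos.2 (abs_lt.1 hs).2),
    show a + b + 1 - c + (c - a - (b + 1)) = 0 by ring, rpow_zero, one_mul]

/-- Boundary limit as `s → 1⁻`. -/
theorem stmt10 (n : ℕ) (hn : 2 ≤ n) (σ : ℝ) (hσ : 0 < σ) (hσ1 : σ < 1) :
    Filter.Tendsto (fun s : ℝ => s ^ ((n : ℝ) / 2) * (1 - s) ^ (1 - σ) *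
        (hyp2F1 (((n : ℝ) - 2 * σ) / 4) (((n : ℝ) - 2 * σ) / 4) ((n : ℝ) / 2) s *
          deriv (hyp2F1 (((n : ℝ) - 2 * σ) / 4) (((n : ℝ) - 2 * σ) / 4) ((n : ℝ) / 2)) s))
      (nhdsWithin 1 (Set.Iio 1))
      (nhds (Real.Gamma ((n : ℝ) / 2) ^ 2 * Real.Gamma σ * Real.Gamma (1 - σ) /
        (Real.Gamma (((n : ℝ) - 2 * σ) / 4) ^ 2 * Real.Gamma (((n : ℝ) + 2 * σ) / 4) ^ 2))) := by
  have hn2 : (2 : ℝ) ≤ n := by exact_mod_cast hn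
  set a : ℝ := ((n : ℝ) - 2 * σ) / 4 with ha_def
  set c : ℝ := (n : ℝ) / 2 with hc_def
  have ha : 0 < a := by rw [ha_def]; linarith
  have hc : 0 < c := by rw [hc_def]; linarith
  have hσc : σ = c - a - a := by ring
  have hF := tendsto_hyp2F1_one ha ha (by linarith : a + a < c)
  have hG := tendsto_hyp2F1_one (a := c - a) (b := c - a) (c := c + 1) (by linarith)
    (by linarith) (by linarith)
  have hpow : Tendsto (fun s : ℝ ↦ s ^ c) (𝓝[<] 1) (𝓝 1) := by
    simpa using (continuousAt_id.rpow_const (p := c) (Or.inl one_ne_zero)).tendsto.mono_left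
      nhdsWithin_le_nhds
  convert (hpow.mul (hF.mul (hG.const_mul (a * a / c)))).congr' ?_ using 2
  · rw [show ((n : ℝ) + 2 * σ) / 4 = c - a by ring,
      show c + 1 - (c - a) - (c - a) = 1 - σ by ring, show c + 1 - (c - a) = a + 1 by ring,
      ← hσc, Gamma_add_one hc.ne', Gamma_add_one ha.ne']
    have := (Gamma_pos_of_pos ha).ne'
    have := (Gamma_pos_of_pos (by linarith : 0 < c - a)).ne'
    field_simp
  · filter_upwards [Ioo_mem_nhdsLT (zero_lt_one' ℝ)] with s hs
    rw [← show a + a + 1 - c = 1 - σ by linarith, ← one_sub_rpow_mul_deriv_hyp2F1 ha ha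
      (by linarith) (by linarith) (abs_lt.2 ⟨by linarith [hs.1], hs.2⟩)]
    ring
end
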